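/- arXiv:2001.05787 — 2 statements merged into one kernel-verified Lean document; each statement's English description precedes it below -/
import Mathlib

section
/- Let n, r be positive integers, a_1 ∈ {0,…,n−1}, a_2 ∈ {0,…,r−1}. Then (as an identity in ℂ): |T_{a_1,a_2}(n,r)| = (1/(nr)) ∑_{d=1}^{n} c_d(a_1)·r^{n/d}·gcd(r,d)·𝟙{d | n}·𝟙{gcd(r,d) | a_2}. -/
open scoped Classical
open Finset

/-- `e(x) = exp(2πi x)` -/
noncomputable def expu (x : ℝ) : ℂ := Complex.exp (2 * Real.pi * Complex.I * x)

/-- Ramanujan's sum `c_d(a)`. -/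
noncomputable def ramanujan (d a : ℕ) : ℂ :=
  ∑ j ∈ (Finset.Icc 1 d).filter (fun j => Nat.gcd j d = 1), expu (((a : ℝ) * (j : ℝ)) / (d : ℝ))

/-- `γ(x) = ∑_{i=1}^{n-1} i·𝟙{x_i > x_{i+1}}` (1-indexed). -/
noncomputable def gam {n r : ℕ} (x : Fin n → Fin r) : ℕ :=
  ∑ i : Fin n, if h : (i : ℕ) + 1 < n then
      (if (x ⟨(i : ℕ) + 1, h⟩ : ℕ) < (x i : ℕ) then (i : ℕ) + 1 else 0) else 0

/-- `σ(x) = ∑ x_i`. -/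
noncomputable def sig {n r : ℕ} (x : Fin n → Fin r) : ℕ := ∑ i : Fin n, (x i : ℕ)

/-!
Detecting both congruences with additive characters `ψ m k = e(k/m)` gives
`n r |T| = ∑_{s<n} ∑_{t<r} e(-s a₁/n) e(-t a₂/r) S(s,t)` with
`S(s,t) = ∑_x e(s γ(x)/n) e(t σ(x)/r)`.
Write `g = gcd(s,n)`, `n = g d`, `s = g s'`. Modulo `d`, `γ(x)` is the sum of the `γ`s of the `g`
blocks of length `d` of `x`, so `S(s,t)` is the `g`-th power of the same sum over `Fin d → Fin r`
with `s'` coprime to `d`. There, rotating a word lowers `γ` modulo `d` by its number of cyclic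
descents, so averaging over the `d` rotations kills every word with a cyclic descent, i.e. every
non-constant word, and the constant words contribute `r 𝟙{r ∣ d t}`. The sum over `t` is then
`r^g gcd(r,d) 𝟙{gcd(r,d) ∣ a₂}`, and grouping the `s` by `n / gcd(s,n)` produces the Ramanujan
sums `c_d(a₁)`.
-/

noncomputable def ψ (m : ℕ) : AddChar ℤ ℂ where
  toFun k := expu (k / m)
  map_zero_eq_one' := by simp [expu]
  map_add_eq_mul' a b := by
    simp only [expu, ← Complex.exp_add]
    congr 1
    push_cast
    ring

lemma ψ_apply (m : ℕ) (k : ℤ) : ψ m k = expu (k / m) := rfl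

lemma ψ_natCast_mul_self (m : ℕ) (c : ℤ) : ψ m (m * c) = 1 := by
  rw [ψ_apply, expu, Complex.exp_eq_one_iff]
  rcases eq_or_ne m 0 with rfl | hm
  · exact ⟨0, by simp⟩
  · exact ⟨c, by push_cast; field_simp⟩

lemma ψ_eq_one_iff {m : ℕ} (hm : 0 < m) {k : ℤ} : ψ m k = 1 ↔ (m : ℤ) ∣ k := by
  refine ⟨fun h => ?_, fun ⟨c, hc⟩ => hc ▸ ψ_natCast_mul_self m c⟩
  obtain ⟨c, hc⟩ := Complex.exp_eq_one_iff.mp h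
  have hC : (((k : ℝ) / m : ℝ) : ℂ) = c :=
    mul_left_cancel₀ Complex.two_pi_I_ne_zero (by rw [hc]; ring)
  have hR : (k : ℝ) / m = c := by exact_mod_cast hC
  have hm' : (m : ℝ) ≠ 0 := by exact_mod_cast hm.ne'
  rw [div_eq_iff hm'] at hR
  exact ⟨c, by rw [mul_comm]; exact_mod_cast hR⟩

lemma ψ_eq_of_intCast_eq {m : ℕ} {a b : ℤ} (h : (a : ZMod m) = b) : ψ m a = ψ m b := by
  obtain ⟨c, hc⟩ := (ZMod.intCast_eq_intCast_iff_dvd_sub a b m).mp h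
  rw [show b = a + m * c by omega, AddChar.map_add_eq_mul, ψ_natCast_mul_self, mul_one]

lemma ψ_mul_left {g : ℕ} (hg : 0 < g) (d : ℕ) (k : ℤ) : ψ (g * d) (g * k) = ψ d k := by
  have : (g : ℝ) ≠ 0 := by exact_mod_cast hg.ne'
  simp only [ψ_apply]
  congr 1
  push_cast
  rw [mul_div_mul_left _ _ this]

lemma ψ_sum {ι : Type*} (m : ℕ) (s : Finset ι) (f : ι → ℤ) :
    ψ m (∑ i ∈ s, f i) = ∏ i ∈ s, ψ m (f i) := by
  induction s using Finset.cons_induction with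
  | empty => simp
  | cons a s ha ih => rw [sum_cons, prod_cons, AddChar.map_add_eq_mul, ih]

lemma geom_sum_eq_ite_of_pow_eq_one {K : Type*} [Field K] {ζ : K} {m : ℕ} (h : ζ ^ m = 1) :
    ∑ k ∈ range m, ζ ^ k = if ζ = 1 then (m : K) else 0 := by
  split_ifs with hζ
  · simp [hζ]
  · rw [geom_sum_eq hζ, h, sub_self, zero_div]

lemma sum_range_ψ_mul {m : ℕ} (hm : 0 < m) (c : ℤ) :
    ∑ j ∈ range m, ψ m (c * j) = if (m : ℤ) ∣ c then (m : ℂ) else 0 := by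
  have hpow (j : ℕ) : ψ m (c * j) = ψ m c ^ j := by
    rw [← AddChar.map_nsmul_eq_pow, nsmul_eq_mul, mul_comm]
  simp only [hpow]
  rw [geom_sum_eq_ite_of_pow_eq_one (by rw [← hpow, mul_comm, ψ_natCast_mul_self])]
  exact if_congr (ψ_eq_one_iff hm) rfl rfl

lemma sum_range_ψ_mul_sub {m : ℕ} (hm : 0 < m) (a b : ℕ) :
    ∑ s ∈ range m, ψ m (s * ((a : ℤ) - b)) = if a ≡ b [MOD m] then (m : ℂ) else 0 := by
  simp only [mul_comm (_ : ℤ)]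
  rw [sum_range_ψ_mul hm]
  refine if_congr ?_ rfl rfl
  rw [← ZMod.intCast_eq_intCast_iff_dvd_sub, eq_comm, ← ZMod.natCast_eq_natCast_iff]
  norm_cast

/-- Averaging over the `m` powers of `T`: the twist `ζ x`, an `m`-th root of unity constant on
`T`-orbits, contributes the factor `∑_{k<m} ζ x ^ k`, which vanishes unless `ζ x = 1`. -/
lemma sum_eq_sum_filter_of_twisted_invariant {α K : Type*} [Fintype α] [Field K] [CharZero K]
    (T : α ≃ α) (W ζ : α → K) {m : ℕ} (hm : 0 < m) (hW : ∀ x, W (T x) = W x * ζ x)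
    (hζ : ∀ x, ζ (T x) = ζ x) (hpow : ∀ x, ζ x ^ m = 1) :
    ∑ x, W x = ∑ x with ζ x = 1, W x := by
  have hiter (k : ℕ) : ∑ x, W x * ζ x ^ k = ∑ x, W x := by
    induction k with
    | zero => simp
    | succ k ih =>
      calc ∑ x, W x * ζ x ^ (k + 1) = ∑ x, W (T x) * ζ (T x) ^ k :=
            sum_congr rfl fun x _ => by rw [hW, hζ]; ring
        _ = ∑ x, W x := by rw [Equiv.sum_comp T (fun x => W x * ζ x ^ k), ih]
  have hm' : (m : K) ≠ 0 := by exact_mod_cast hm.ne'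
  refine mul_left_cancel₀ hm' ?_
  calc (m : K) * ∑ x, W x = ∑ k ∈ range m, ∑ x, W x * ζ x ^ k := by simp [hiter]
    _ = ∑ x, W x * ∑ k ∈ range m, ζ x ^ k := by rw [sum_comm]; simp only [mul_sum]
    _ = (m : K) * ∑ x with ζ x = 1, W x := by
      simp only [geom_sum_eq_ite_of_pow_eq_one (hpow _), sum_filter, mul_sum]
      exact sum_congr rfl fun x _ => by split_ifs <;> simp [mul_comm]

noncomputable def charSum (n r s t : ℕ) : ℂ :=
  ∑ x : Fin n → Fin r, ψ n (s * gam x) * ψ r (t * sig x)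

lemma gam_const {n r : ℕ} (c : Fin r) : gam (Function.const (Fin n) c) = 0 := by
  simp [gam]

lemma sig_const {n r : ℕ} (c : Fin r) : sig (Function.const (Fin n) c) = n * c := by
  simp [sig]

section Cyclic

variable {d r : ℕ} [NeZero d]

def rot : (Fin d → Fin r) ≃ (Fin d → Fin r) :=
  (Equiv.addRight (1 : Fin d)).symm.arrowCongr (Equiv.refl _)

lemma rot_apply (u : Fin d → Fin r) (i : Fin d) : rot u i = u (i + 1) := rfl

noncomputable def cyclicDescents (u : Fin d → Fin r) : ℕ := #{i | (u (i + 1) : ℕ) < u i}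

noncomputable def cyclicGam (u : Fin d → Fin r) : ZMod d :=
  ∑ i, if (u (i + 1) : ℕ) < u i then ((i : ℕ) + 1 : ZMod d) else 0

lemma natCast_val_add_one (i : Fin d) : (((i + 1 : Fin d) : ℕ) : ZMod d) = (i : ℕ) + 1 := by
  simp [Fin.val_add]

lemma sum_val_add_one (u : Fin d → Fin r) : ∑ i, (u (i + 1) : ℕ) = ∑ i, (u i : ℕ) :=
  Equiv.sum_comp (Equiv.addRight 1) (fun i => (u i : ℕ))

lemma sig_rot (u : Fin d → Fin r) : sig (rot u) = sig u := sum_val_add_one u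

lemma cyclicDescents_rot (u : Fin d → Fin r) : cyclicDescents (rot u) = cyclicDescents u := by
  rw [cyclicDescents, cyclicDescents, card_filter, card_filter]
  exact Equiv.sum_comp (Equiv.addRight 1) (fun i => if (u (i + 1) : ℕ) < u i then 1 else 0)

/-- The wrap-around descent that `cyclicGam` adds to `γ` has weight `d ≡ 0`. -/
lemma natCast_gam_eq_cyclicGam (u : Fin d → Fin r) : (gam u : ZMod d) = cyclicGam u := by
  simp only [gam, cyclicGam, Nat.cast_sum]
  refine sum_congr rfl fun i _ => ?_
  by_cases h : (i : ℕ) + 1 < d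
  · have hi : (⟨i + 1, h⟩ : Fin d) = i + 1 := Fin.ext (Fin.val_add_one_of_lt' h).symm
    rw [dif_pos h, hi]
    split_ifs <;> simp
  · have hi : (((i : ℕ) + 1 : ℕ) : ZMod d) = 0 := by
      rw [show (i : ℕ) + 1 = d by omega, ZMod.natCast_self]
    push_cast at hi
    rw [dif_neg h, hi]
    split_ifs <;> simp

lemma cyclicGam_eq_cyclicGam_rot_add (u : Fin d → Fin r) :
    cyclicGam u = cyclicGam (rot u) + cyclicDescents u := by
  simp only [cyclicGam, cyclicDescents, card_filter, rot_apply, Nat.cast_sum]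
  rw [← Equiv.sum_comp (Equiv.addRight 1), ← Equiv.sum_comp (Equiv.addRight 1)
    (fun i => (((if (u (i + 1) : ℕ) < u i then 1 else 0 : ℕ)) : ZMod d)), ← sum_add_distrib]
  refine sum_congr rfl fun i _ => ?_
  simp only [Equiv.coe_addRight, natCast_val_add_one]
  by_cases hD : (u (i + 1 + 1) : ℕ) < u (i + 1) <;> simp [hD]

lemma natCast_gam_rot (u : Fin d → Fin r) :
    (gam (rot u) : ZMod d) = gam u - cyclicDescents u := by
  rw [natCast_gam_eq_cyclicGam, natCast_gam_eq_cyclicGam, cyclicGam_eq_cyclicGam_rot_add u,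
    add_sub_cancel_right]

/-- The entry sum is invariant under rotation, so not every cyclic step is a strict descent. -/
lemma cyclicDescents_lt (u : Fin d → Fin r) : cyclicDescents u < d := by
  have hasc : ∃ i, ¬ (u (i + 1) : ℕ) < u i := by
    by_contra! h
    exact (sum_lt_sum_of_nonempty univ_nonempty fun i _ => h i).ne (sum_val_add_one u)
  obtain ⟨i, hi⟩ := hasc
  simpa [cyclicDescents] using card_lt_card (filter_ssubset.mpr ⟨i, mem_univ i, hi⟩)

open Fin.NatCast in
lemma cyclicDescents_eq_zero_iff (u : Fin d → Fin r) :
    cyclicDescents u = 0 ↔ ∃ c, Function.const (Fin d) c = u := by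
  refine ⟨fun h => ⟨u 0, ?_⟩, fun ⟨c, hc⟩ => by simp [cyclicDescents, ← hc]⟩
  have hle : ∀ i ∈ univ, (u i : ℕ) ≤ u (i + 1) := by
    simpa [cyclicDescents, filter_eq_empty_iff] using h
  have hstep := (sum_eq_sum_iff_of_le hle).mp (sum_val_add_one u).symm
  have hnat (k : ℕ) : u (k : Fin d) = u 0 := by
    induction k with
    | zero => simp
    | succ k ih => rw [Nat.cast_succ, ← ih]; exact Fin.ext (hstep _ (mem_univ _)).symm
  funext i
  rw [Function.const_apply, ← hnat i, Fin.cast_val_eq_self]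

lemma ψ_gam_rot (s : ℕ) (u : Fin d → Fin r) :
    ψ d (s * gam (rot u)) = ψ d (s * gam u) * ψ d (-(s * cyclicDescents u)) := by
  rw [← AddChar.map_add_eq_mul]
  apply ψ_eq_of_intCast_eq
  push_cast
  rw [natCast_gam_rot]
  ring

lemma charSum_of_coprime (hr : 0 < r) {s : ℕ} (hs : s.Coprime d) (t : ℕ) :
    charSum d r s t = if r ∣ d * t then (r : ℂ) else 0 := by
  have hd := NeZero.pos d
  have htwist := sum_eq_sum_filter_of_twisted_invariant (rot (d := d) (r := r))
    (fun u => ψ d (s * gam u) * ψ r (t * sig u)) (fun u => ψ d (-(s * cyclicDescents u))) hd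
    (fun u => by rw [ψ_gam_rot, sig_rot, mul_right_comm])
    (fun u => by rw [cyclicDescents_rot])
    (fun u => by rw [← AddChar.map_nsmul_eq_pow, nsmul_eq_mul, ψ_natCast_mul_self])
  have hfixed : ∀ u : Fin d → Fin r,
      ψ d (-(s * cyclicDescents u)) = 1 ↔ ∃ c, Function.const (Fin d) c = u := by
    intro u
    rw [ψ_eq_one_iff hd, dvd_neg, ← cyclicDescents_eq_zero_iff]
    norm_cast
    rw [Nat.Coprime.dvd_mul_left hs.symm]
    exact ⟨fun h => Nat.eq_zero_of_dvd_of_lt h (cyclicDescents_lt u), fun h => h ▸ dvd_zero d⟩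
  have hconst : ({u | ψ d (-(s * cyclicDescents u)) = 1} : Finset (Fin d → Fin r)) =
      univ.map ⟨Function.const (Fin d), Function.const_injective⟩ := by
    ext u
    simp [hfixed]
  rw [charSum, htwist, hconst, sum_map]
  simp only [Function.Embedding.coeFn_mk, gam_const, sig_const]
  simp only [Nat.cast_zero, mul_zero, AddChar.map_zero_eq_one, one_mul]
  rw [Fin.sum_univ_eq_sum_range (fun c => ψ r (t * (d * c : ℕ))) r]
  convert sum_range_ψ_mul hr (d * t) using 2 with c
  · congr 1; push_cast; ring
  · norm_cast

end Cyclic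

def blocks (g d r : ℕ) : (Fin (g * d) → Fin r) ≃ (Fin g → Fin d → Fin r) :=
  (finProdFinEquiv.arrowCongr (Equiv.refl _)).symm.trans (Equiv.curry _ _ _)

section Blocks

variable {g d r : ℕ}

lemma blocks_apply (x : Fin (g * d) → Fin r) (k : Fin g) (i : Fin d) :
    blocks g d r x k i = x (finProdFinEquiv (k, i)) := rfl

lemma sig_eq_sum_blocks (x : Fin (g * d) → Fin r) : sig x = ∑ k, sig (blocks g d r x k) := by
  simp only [sig, blocks_apply]
  rw [← Equiv.sum_comp finProdFinEquiv, Fintype.sum_prod_type]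

/-- Modulo `d`, the positions `d k + i + 1` of descents inside block `k` count as `i + 1`, and
descents across two blocks sit at multiples of `d`. -/
lemma natCast_gam_eq_sum_blocks (x : Fin (g * d) → Fin r) :
    (gam x : ZMod d) = ∑ k, (gam (blocks g d r x k) : ZMod d) := by
  simp only [gam, Nat.cast_sum, blocks_apply]
  rw [← Equiv.sum_comp finProdFinEquiv, Fintype.sum_prod_type]
  refine sum_congr rfl fun k _ => sum_congr rfl fun i _ => ?_
  have hval : (finProdFinEquiv (k, i) : ℕ) = i + d * k := finProdFinEquiv_apply_val _
  by_cases h : (i : ℕ) + 1 < d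
  · have hlt : (finProdFinEquiv (k, i) : ℕ) + 1 < g * d := by
      rw [hval]; nlinarith [k.isLt]
    have hnext : (⟨_ + 1, hlt⟩ : Fin (g * d)) = finProdFinEquiv (k, ⟨i + 1, h⟩) :=
      Fin.ext (by simp only [hval, finProdFinEquiv_apply_val]; ring)
    rw [dif_pos hlt, dif_pos h, hnext]
    by_cases hx : (x (finProdFinEquiv (k, ⟨i + 1, h⟩)) : ℕ) < x (finProdFinEquiv (k, i)) <;>
      simp [hx, hval]
  · have hwrap : (((finProdFinEquiv (k, i) : ℕ) + 1 : ℕ) : ZMod d) = 0 := by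
      rw [hval, show (i : ℕ) + d * k + 1 = d * (k + 1) by rw [mul_add, mul_one]; omega]
      simp
    rw [dif_neg h]
    split_ifs <;> simp only [hwrap, Nat.cast_zero]

end Blocks

lemma charSum_mul_left {g d r s : ℕ} (hg : 0 < g) (t : ℕ) :
    charSum (g * d) r (g * s) t = charSum d r s t ^ g := by
  have hfactor (x : Fin (g * d) → Fin r) :
      ψ (g * d) ((g * s : ℕ) * gam x) * ψ r (t * sig x) =
        ∏ k, ψ d (s * gam (blocks g d r x k)) * ψ r (t * sig (blocks g d r x k)) := by
    have hgam : ψ (g * d) ((g * s : ℕ) * gam x) = ∏ k, ψ d (s * gam (blocks g d r x k)) := by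
      rw [← ψ_sum, Nat.cast_mul, mul_assoc, ψ_mul_left hg]
      apply ψ_eq_of_intCast_eq
      push_cast
      rw [natCast_gam_eq_sum_blocks, mul_sum]
    rw [hgam, sig_eq_sum_blocks, Nat.cast_sum, mul_sum, ψ_sum, ← prod_mul_distrib]
  rw [charSum, charSum, Fintype.sum_congr _ _ hfactor, Equiv.sum_comp (blocks g d r)
    (fun v => ∏ k, ψ d (s * gam (v k)) * ψ r (t * sig (v k))),
    ← Fintype.prod_sum (fun _ u => ψ d (s * gam u) * ψ r (t * sig u)), prod_const, card_univ,
    Fintype.card_fin]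

lemma charSum_eq {n r : ℕ} (hn : 0 < n) (hr : 0 < r) (s t : ℕ) :
    charSum n r s t = if r ∣ n / s.gcd n * t then (r : ℂ) ^ s.gcd n else 0 := by
  have hg : 0 < s.gcd n := Nat.gcd_pos_of_pos_right s hn
  obtain ⟨s', d, hco, hs, hnd⟩ := Nat.exists_coprime s n
  generalize s.gcd n = g at hg hs hnd ⊢
  subst hs hnd
  have hd : 0 < d := Nat.pos_of_mul_pos_right hn
  have : NeZero d := ⟨hd.ne'⟩
  rw [mul_comm d g, mul_comm s' g, Nat.mul_div_cancel_left d hg, charSum_mul_left hg,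
    charSum_of_coprime hr hco]
  split_ifs <;> simp [hg.ne']

lemma filter_dvd_range_mul {q : ℕ} (hq : 0 < q) (d : ℕ) :
    {t ∈ range (q * d) | q ∣ t} = (range d).image (q * ·) := by
  ext t
  simp only [mem_filter, mem_range, mem_image]
  constructor
  · rintro ⟨ht, k, rfl⟩
    exact ⟨k, Nat.lt_of_mul_lt_mul_left ht, rfl⟩
  · rintro ⟨k, hk, rfl⟩
    exact ⟨Nat.mul_lt_mul_of_pos_left hk hq, dvd_mul_right q k⟩

lemma filter_div_gcd_eq_image {q d : ℕ} (hq : 0 < q) (hd : 0 < d) :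
    {s ∈ range (q * d) | q * d / s.gcd (q * d) = d} =
      {j ∈ range d | j.Coprime d}.image (q * ·) := by
  have hgcd (s : ℕ) : q * d / s.gcd (q * d) = d ↔ s.gcd (q * d) = q := by
    have hdvd := Nat.gcd_dvd_right s (q * d)
    constructor
    · intro h
      have := Nat.div_mul_cancel hdvd
      rw [h, mul_comm] at this
      exact Nat.eq_of_mul_eq_mul_right hd this
    · intro h
      rw [h, Nat.mul_div_cancel_left d hq]
  ext s
  simp only [mem_filter, mem_range, mem_image, hgcd]
  constructor
  · rintro ⟨hs, hg⟩
    obtain ⟨j, rfl⟩ : q ∣ s := hg ▸ Nat.gcd_dvd_left s (q * d)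
    rw [Nat.gcd_mul_left] at hg
    exact ⟨j, ⟨Nat.lt_of_mul_lt_mul_left hs,
      Nat.eq_of_mul_eq_mul_left hq (hg.trans (mul_one q).symm)⟩, rfl⟩
  · rintro ⟨j, ⟨hj, hco⟩, rfl⟩
    exact ⟨Nat.mul_lt_mul_of_pos_left hj hq, by rw [Nat.gcd_mul_left, hco.gcd_eq_one, mul_one]⟩

lemma sum_range_filter_dvd_mul_ψ {r : ℕ} (hr : 0 < r) (e b : ℕ) :
    ∑ t ∈ range r with r ∣ e * t, ψ r (-(t * b)) =
      (r.gcd e : ℂ) * if r.gcd e ∣ b then 1 else 0 := by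
  set g := r.gcd e
  have hg : 0 < g := Nat.gcd_pos_of_pos_left e hr
  obtain ⟨q, hrq⟩ : g ∣ r := Nat.gcd_dvd_left r e
  have hq : 0 < q := Nat.pos_of_mul_pos_left (hrq ▸ hr)
  have hdvd (t : ℕ) : r ∣ e * t ↔ q ∣ t := by
    rw [← Nat.dvd_gcd_mul_iff_dvd_mul, show r.gcd e = g from rfl]
    rw [hrq]
    exact Nat.mul_dvd_mul_iff_left hg
  rw [filter_congr fun t _ => hdvd t, hrq, mul_comm g q, filter_dvd_range_mul hq,
    sum_image fun _ _ _ _ h => Nat.eq_of_mul_eq_mul_left hq h]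
  have hterm (k : ℕ) : ψ (q * g) (-((q * k : ℕ) * b)) = ψ g (-b * k) := by
    rw [← ψ_mul_left hq g]; congr 1; push_cast; ring
  simp only [hterm, sum_range_ψ_mul hg, dvd_neg, Int.natCast_dvd_natCast]
  split_ifs <;> simp

/-- The reflection `j ↦ d - j` matches the conjugated terms with the summands of `c_d(a)`. -/
lemma sum_coprime_ψ_neg_eq_ramanujan {d : ℕ} (a : ℕ) :
    ∑ j ∈ range d with j.Coprime d, ψ d (-(j * a)) = ramanujan d a := by
  refine sum_nbij' (fun j => d - j) (fun j => d - j) ?_ ?_ ?_ ?_ ?_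
  · intro j hj
    simp only [mem_filter, mem_range, mem_Icc] at hj ⊢
    exact ⟨by omega, by rw [Nat.gcd_self_sub_left hj.1.le]; exact hj.2⟩
  · intro j hj
    simp only [mem_filter, mem_range, mem_Icc] at hj ⊢
    exact ⟨by omega, by rw [Nat.Coprime, Nat.gcd_self_sub_left hj.1.2]; exact hj.2⟩
  · intro j hj
    simp only [mem_filter, mem_range] at hj
    omega
  · intro j hj
    simp only [mem_filter, mem_Icc] at hj
    omega
  · intro j hj
    simp only [mem_filter, mem_range] at hj
    rw [ψ_eq_of_intCast_eq (b := a * (d - j : ℕ)) (by push_cast [hj.1.le]; simp [mul_comm]),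
      ψ_apply]
    push_cast
    rfl

lemma sum_fiber_ψ_neg_eq_ramanujan {n d : ℕ} (hn : 0 < n) (hd : d ∣ n) (a : ℕ) :
    ∑ s ∈ range n with n / s.gcd n = d, ψ n (-(s * a)) = ramanujan d a := by
  obtain ⟨q, rfl⟩ := hd
  have hd : 0 < d := Nat.pos_of_mul_pos_right hn
  have hq : 0 < q := Nat.pos_of_mul_pos_left hn
  rw [mul_comm d q, filter_div_gcd_eq_image hq hd,
    sum_image fun _ _ _ _ h => Nat.eq_of_mul_eq_mul_left hq h, ← sum_coprime_ψ_neg_eq_ramanujan]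
  refine sum_congr rfl fun j _ => ?_
  rw [← ψ_mul_left hq d]
  congr 1
  push_cast
  ring

lemma sum_range_ψ_neg_mul_eq_sum_divisors {n : ℕ} (hn : 0 < n) (a : ℕ) (F : ℕ → ℂ) :
    ∑ s ∈ range n, ψ n (-(s * a)) * F (n / s.gcd n) = ∑ d ∈ n.divisors, ramanujan d a * F d := by
  rw [← sum_fiberwise_of_maps_to (g := fun s => n / s.gcd n) (t := n.divisors)
    fun s _ => Nat.mem_divisors.mpr ⟨Nat.div_dvd_of_dvd (Nat.gcd_dvd_right s n), hn.ne'⟩]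
  refine sum_congr rfl fun d hd => ?_
  rw [← sum_fiber_ψ_neg_eq_ramanujan hn (Nat.dvd_of_mem_divisors hd), sum_mul]
  exact sum_congr rfl fun s hs => by rw [(mem_filter.mp hs).2]

lemma sum_range_ψ_neg_mul_charSum {n r : ℕ} (hn : 0 < n) (hr : 0 < r) (s b : ℕ) :
    ∑ t ∈ range r, ψ r (-(t * b)) * charSum n r s t =
      (r : ℂ) ^ s.gcd n *
        ((r.gcd (n / s.gcd n) : ℂ) * if r.gcd (n / s.gcd n) ∣ b then 1 else 0) := by
  calc ∑ t ∈ range r, ψ r (-(t * b)) * charSum n r s t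
      = ∑ t ∈ range r with r ∣ n / s.gcd n * t, ψ r (-(t * b)) * (r : ℂ) ^ s.gcd n := by
        rw [sum_filter]
        exact sum_congr rfl fun t _ => by rw [charSum_eq hn hr, mul_ite, mul_zero]
    _ = _ := by rw [← sum_mul, sum_range_filter_dvd_mul_ψ hr, mul_comm]

lemma natCast_card_filter_modEq_mul {X : Type*} [Fintype X] {n r : ℕ} (hn : 0 < n) (hr : 0 < r)
    (f g : X → ℕ) (a b : ℕ) :
    (#{x | f x ≡ a [MOD n] ∧ g x ≡ b [MOD r]} : ℂ) * (n * r) =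
      ∑ s ∈ range n, ∑ t ∈ range r,
        ψ n (-(s * a)) * ψ r (-(t * b)) * ∑ x, ψ n (s * f x) * ψ r (t * g x) := by
  have hdetect (x : X) : (if f x ≡ a [MOD n] ∧ g x ≡ b [MOD r] then 1 else 0) * ((n : ℂ) * r) =
      ∑ s ∈ range n, ∑ t ∈ range r, ψ n (-(s * a)) * ψ r (-(t * b)) *
        (ψ n (s * f x) * ψ r (t * g x)) := by
    rw [ite_mul, one_mul, zero_mul, ← ite_zero_mul_ite_zero, ← sum_range_ψ_mul_sub hn,
      ← sum_range_ψ_mul_sub hr, sum_mul_sum]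
    refine sum_congr rfl fun s _ => sum_congr rfl fun t _ => ?_
    rw [mul_sub, mul_sub, sub_eq_add_neg, sub_eq_add_neg, AddChar.map_add_eq_mul,
      AddChar.map_add_eq_mul]
    ring
  rw [natCast_card_filter, sum_mul, sum_congr rfl fun x _ => hdetect x, sum_comm]
  simp only [mul_sum]
  exact sum_congr rfl fun s _ => sum_comm

theorem stmt_5_general (n r : ℕ) (hn : 0 < n) (hr : 0 < r)
    (a₁ a₂ : ℕ) :
    ((Finset.univ.filter
        (fun x : Fin n → Fin r => gam x ≡ a₁ [MOD n] ∧ sig x ≡ a₂ [MOD r])).card : ℂ)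
    = (1 / ((n : ℂ) * (r : ℂ))) *
        ∑ d ∈ Finset.Icc 1 n,
          ramanujan d a₁ * (r : ℂ) ^ (n / d) * (Nat.gcd r d : ℂ) *
            (if d ∣ n then 1 else 0) * (if Nat.gcd r d ∣ a₂ then 1 else 0) := by
  have hcount := natCast_card_filter_modEq_mul hn hr (gam (n := n) (r := r)) sig a₁ a₂
  have hsum : ∑ s ∈ range n, ∑ t ∈ range r, ψ n (-(s * a₁)) * ψ r (-(t * a₂)) * charSum n r s t =
      ∑ d ∈ n.divisors, ramanujan d a₁ *
        ((r : ℂ) ^ (n / d) * ((r.gcd d : ℂ) * if r.gcd d ∣ a₂ then 1 else 0)) := by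
    simp only [mul_assoc, ← mul_sum, sum_range_ψ_neg_mul_charSum hn hr]
    rw [← sum_range_ψ_neg_mul_eq_sum_divisors hn]
    exact sum_congr rfl fun s _ => by rw [Nat.div_div_self (Nat.gcd_dvd_right s n) hn.ne']
  have hdivisors : ∑ d ∈ Icc 1 n, ramanujan d a₁ * (r : ℂ) ^ (n / d) * (r.gcd d : ℂ) *
        (if d ∣ n then 1 else 0) * (if r.gcd d ∣ a₂ then 1 else 0) =
      ∑ d ∈ n.divisors, ramanujan d a₁ *
        ((r : ℂ) ^ (n / d) * ((r.gcd d : ℂ) * if r.gcd d ∣ a₂ then 1 else 0)) := by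
    rw [Nat.divisors, Ico_add_one_right_eq_Icc, sum_filter]
    exact sum_congr rfl fun d _ => by split_ifs <;> ring
  have hnr : (n : ℂ) * r ≠ 0 := mul_ne_zero (by exact_mod_cast hn.ne') (by exact_mod_cast hr.ne')
  rw [hdivisors, ← hsum]
  unfold charSum
  rw [← hcount, one_div, mul_comm _ ((n : ℂ) * r), inv_mul_cancel_left₀ hnr]

theorem stmt_5 (n r : ℕ) (hn : 0 < n) (hr : 0 < r)
    (a₁ a₂ : ℕ) (ha₁ : a₁ < n) (ha₂ : a₂ < r) :
    ((Finset.univ.filter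
        (fun x : Fin n → Fin r => gam x ≡ a₁ [MOD n] ∧ sig x ≡ a₂ [MOD r])).card : ℂ)
    = (1 / ((n : ℂ) * (r : ℂ))) *
        ∑ d ∈ Finset.Icc 1 n,
          ramanujan d a₁ * (r : ℂ) ^ (n / d) * (Nat.gcd r d : ℂ) *
            (if d ∣ n then 1 else 0) * (if Nat.gcd r d ∣ a₂ then 1 else 0) :=
  stmt_5_general n r hn hr a₁ a₂
end

section
/- Let n, r be positive integers, and let q, z, w_0, …, w_{r−1} ∈ ℂ with [i]_q := 1 + q + ⋯ + q^{i−1} ≠ 0 for all i ∈ {1,…,n}. Let T_n := { ⟨t_0,…,t_{r−1}⟩ ∈ {0,…,n}^r : ∑_{i=0}^{r−1} t_i = n }. Then ∑_{x ∈ {0,…,r−1}^n} q^{γ(x)} z^{σ(x)} ∏_{j=0}^{r−1} w_j^{τ_j(x)} = ∑_{t ∈ T_n} ([n]!_q / ∏_{j=0}^{r−1} [t_j]!_q) · ∏_{j=0}^{r−1} w_j^{t_j} z^{j·t_j}. -/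
open scoped Classical
open Finset

/-- `τ_j(x)` : the number of components of `x` equal to `j`. -/
noncomputable def tau {n r : ℕ} (j : Fin r) (x : Fin n → Fin r) : ℕ :=
  (Finset.univ.filter (fun i => x i = j)).card

/-- The `q`-integer `[k]_q = 1 + q + ⋯ + q^{k-1}` evaluated at `q : ℂ`. -/
noncomputable def qintC (q : ℂ) (k : ℕ) : ℂ := ∑ i ∈ Finset.range k, q ^ i

/-- The `q`-factorial `[a]!_q = ∏_{i=1}^a [i]_q` evaluated at `q : ℂ`. -/
noncomputable def qfactC (q : ℂ) (a : ℕ) : ℂ := ∏ i ∈ Finset.Icc 1 a, qintC q i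

lemma qintC_add (q : ℂ) (a b : ℕ) : qintC q (a + b) = qintC q a + q ^ a * qintC q b := by
  simp only [qintC, Finset.sum_range_add, Finset.mul_sum, pow_add]

lemma qfactC_succ (q : ℂ) (a : ℕ) : qfactC q (a + 1) = qfactC q a * qintC q (a + 1) := by
  rw [qfactC, qfactC, ← Finset.prod_Icc_succ_top (Nat.le_add_left 1 a)]

lemma TIco (q : ℂ) (f : ℕ → ℕ) : ∀ b a,
    ∑ k ∈ Finset.Ico a b, q ^ (∑ l ∈ Finset.Ico (k+1) b, f l) * qintC q (f k)
      = qintC q (∑ l ∈ Finset.Ico a b, f l) := by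
  intro b
  induction b with
  | zero => intro a; simp [qintC]
  | succ b ih =>
    intro a
    rcases le_or_gt a b with h | h
    · rw [Finset.sum_Ico_succ_top h, Finset.sum_Ico_succ_top h]
      have e1 : ∀ k ∈ Finset.Ico a b,
          q ^ (∑ l ∈ Finset.Ico (k+1) (b+1), f l) * qintC q (f k)
            = q ^ (f b) * (q ^ (∑ l ∈ Finset.Ico (k+1) b, f l) * qintC q (f k)) := by
        intro k hk
        rw [Finset.sum_Ico_succ_top (Finset.mem_Ico.mp hk).2, pow_add]
        ring
      rw [Finset.sum_congr rfl e1, ← Finset.mul_sum, ih a, Finset.Ico_self,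
        Finset.sum_empty, pow_zero, one_mul, qintC_add]
      rw [← qintC_add, Nat.add_comm, qintC_add]; ring
    · have : b + 1 ≤ a := h
      rw [Finset.Ico_eq_empty (by omega)]
      simp [qintC]

noncomputable def Fv (r : ℕ) (s : Fin r → ℕ) : ℕ → ℕ :=
  fun l => if h : l < r then s ⟨l, h⟩ else 0

lemma sum_Ioi_eq (r : ℕ) (s : Fin r → ℕ) (k : Fin r) :
    ∑ l ∈ Finset.Ioi k, s l = ∑ l ∈ Finset.Ico ((k : ℕ)+1) r, Fv r s l := by
  apply Finset.sum_nbij' (i := fun (l : Fin r) => (l : ℕ))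
    (j := fun (l : ℕ) => if h : l < r then (⟨l, h⟩ : Fin r) else k)
  · intro a ha
    simp only [Finset.mem_Ioi, Fin.lt_def] at ha
    simp only [Finset.mem_Ico]
    exact ⟨ha, a.isLt⟩
  · intro a ha
    simp only [Finset.mem_Ico] at ha
    simp only [Finset.mem_Ioi, Fin.lt_def]
    rw [dif_pos ha.2]
    exact ha.1
  · intro a ha; simp [a.isLt]
  · intro a ha
    simp only [Finset.mem_Ico] at ha
    simp [ha.2]
  · intro a ha
    simp only [Fv, dif_pos a.isLt, Fin.eta]

lemma sum_univ_eq (r : ℕ) (s : Fin r → ℕ) :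
    ∑ l : Fin r, s l = ∑ l ∈ Finset.Ico 0 r, Fv r s l := by
  rw [← Finset.range_eq_Ico, ← Fin.sum_univ_eq_sum_range (fun l => Fv r s l) r]
  apply Finset.sum_congr rfl
  intro l _
  simp [Fv, l.isLt]

lemma star (q : ℂ) (r : ℕ) (s : Fin r → ℕ) (j : Fin r) :
    ∑ k : Fin r, q ^ ((∑ l : Fin r, s l) * (if j < k then 1 else 0)
        + ∑ l ∈ Finset.Ioi k, s l) * qintC q (s k)
      = q ^ (∑ l ∈ Finset.Ioi j, s l) * qintC q (∑ l : Fin r, s l) := by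
  set F := Fv r s with hF
  set N := ∑ l ∈ Finset.Ico 0 r, F l with hN
  set E := ∑ l ∈ Finset.Ico ((j : ℕ)+1) r, F l with hE
  set D := ∑ l ∈ Finset.Ico 0 ((j : ℕ)+1), F l with hD
  have hNs : (∑ l : Fin r, s l) = N := sum_univ_eq r s
  have hDE : D + E = N := by
    rw [hN, hD, hE, Finset.sum_Ico_consecutive _ (Nat.zero_le _) (Nat.succ_le_of_lt j.isLt)]
  have step1 : ∑ k : Fin r, q ^ ((∑ l : Fin r, s l) * (if j < k then 1 else 0)
        + ∑ l ∈ Finset.Ioi k, s l) * qintC q (s k)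
      = ∑ k ∈ Finset.range r, (fun kn => q ^ (N * (if (j : ℕ) < kn then 1 else 0)
        + ∑ l ∈ Finset.Ico (kn+1) r, F l) * qintC q (F kn)) k := by
    rw [← Fin.sum_univ_eq_sum_range]
    apply Finset.sum_congr rfl
    intro k _
    have h1 : s k = F (k : ℕ) := by simp [hF, Fv, k.isLt]
    simp only [Fin.lt_def, hNs, h1, sum_Ioi_eq r s k, ← hF]
  rw [step1, Finset.range_eq_Ico,
    ← Finset.sum_Ico_consecutive _ (Nat.zero_le ((j : ℕ)+1)) (Nat.succ_le_of_lt j.isLt)]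
  have partA : ∑ k ∈ Finset.Ico 0 ((j : ℕ)+1), (fun kn => q ^ (N * (if (j : ℕ) < kn then 1 else 0)
        + ∑ l ∈ Finset.Ico (kn+1) r, F l) * qintC q (F kn)) k = q ^ E * qintC q D := by
    have : ∀ k ∈ Finset.Ico 0 ((j : ℕ)+1), q ^ (N * (if (j : ℕ) < k then 1 else 0)
        + ∑ l ∈ Finset.Ico (k+1) r, F l) * qintC q (F k)
        = q ^ E * (q ^ (∑ l ∈ Finset.Ico (k+1) ((j : ℕ)+1), F l) * qintC q (F k)) := by
      intro k hk
      simp only [Finset.mem_Ico] at hk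
      have hkj : ¬ ((j : ℕ) < k) := by omega
      rw [if_neg hkj, Nat.mul_zero, Nat.zero_add,
        ← Finset.sum_Ico_consecutive F (by omega : k+1 ≤ (j : ℕ)+1) (Nat.succ_le_of_lt j.isLt),
        pow_add, ← hE]
      ring
    rw [Finset.sum_congr rfl this, ← Finset.mul_sum, TIco, ← hD]
  have partB : ∑ k ∈ Finset.Ico ((j : ℕ)+1) r, (fun kn => q ^ (N * (if (j : ℕ) < kn then 1 else 0)
        + ∑ l ∈ Finset.Ico (kn+1) r, F l) * qintC q (F kn)) k = q ^ N * qintC q E := by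
    have : ∀ k ∈ Finset.Ico ((j : ℕ)+1) r, q ^ (N * (if (j : ℕ) < k then 1 else 0)
        + ∑ l ∈ Finset.Ico (k+1) r, F l) * qintC q (F k)
        = q ^ N * (q ^ (∑ l ∈ Finset.Ico (k+1) r, F l) * qintC q (F k)) := by
      intro k hk
      simp only [Finset.mem_Ico] at hk
      rw [if_pos (show (j : ℕ) < k by omega), Nat.mul_one, pow_add]
      ring
    rw [Finset.sum_congr rfl this, ← Finset.mul_sum, TIco, ← hE]
  rw [partA, partB, sum_Ioi_eq r s j, hNs, ← hE, ← hDE, qintC_add, pow_add]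
  ring

lemma fullsum (q : ℂ) (r : ℕ) (t : Fin r → ℕ) :
    ∑ j : Fin r, q ^ (∑ l ∈ Finset.Ioi j, t l) * qintC q (t j)
      = qintC q (∑ l : Fin r, t l) := by
  have step1 : ∑ j : Fin r, q ^ (∑ l ∈ Finset.Ioi j, t l) * qintC q (t j)
      = ∑ k ∈ Finset.range r, (fun kn =>
          q ^ (∑ l ∈ Finset.Ico (kn+1) r, Fv r t l) * qintC q (Fv r t kn)) k := by
    rw [← Fin.sum_univ_eq_sum_range]
    apply Finset.sum_congr rfl
    intro k _
    have h1 : t k = Fv r t (k : ℕ) := by simp [Fv, k.isLt]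
    rw [sum_Ioi_eq r t k, ← h1]
  rw [step1, Finset.range_eq_Ico, TIco, sum_univ_eq]

lemma tau_snoc {m r : ℕ} (y : Fin (m+1) → Fin r) (j k : Fin r) :
    tau k (Fin.snoc y j) = tau k y + (if j = k then 1 else 0) := by
  simp only [tau, Finset.card_filter]
  rw [Fin.sum_univ_castSucc]
  simp [Fin.snoc_castSucc, Fin.snoc_last]

lemma gam_snoc {m r : ℕ} (y : Fin (m+1) → Fin r) (j : Fin r) :
    gam (Fin.snoc y j) = gam y
      + (if (j : ℕ) < (y (Fin.last m) : ℕ) then m + 1 else 0) := by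
  unfold gam
  rw [Fin.sum_univ_castSucc (n := m+1), Fin.sum_univ_castSucc (n := m)]
  rw [Fin.sum_univ_castSucc (n := m)]
  simp only [Fin.coe_castSucc, Fin.val_last, Fin.snoc_castSucc, Fin.snoc_last]
  have key : ∀ (x : Fin m) (h : (x:ℕ)+1 < m+2),
      (Fin.snoc y j : Fin (m+2) → Fin r) ⟨(x:ℕ)+1, h⟩ = y ⟨(x:ℕ)+1, by omega⟩ := by
    intro x h
    have e : (⟨(x:ℕ)+1, h⟩ : Fin (m+2)) = Fin.castSucc ⟨(x:ℕ)+1, by omega⟩ := rfl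
    rw [e, Fin.snoc_castSucc]
  have hsum : (∑ x : Fin m, (if h : (x:ℕ) + 1 < m + 1 + 1 then
        (if (((Fin.snoc y j : Fin (m+2) → Fin r) ⟨(x:ℕ)+1, h⟩) : ℕ) < ((y x.castSucc : Fin r) : ℕ)
          then (x:ℕ)+1 else 0) else 0))
      = ∑ x : Fin m, (if h : (x:ℕ)+1 < m+1 then
        (if ((y ⟨(x:ℕ)+1, h⟩ : Fin r) : ℕ) < ((y x.castSucc : Fin r) : ℕ)
          then (x:ℕ)+1 else 0) else 0) := by
    apply Finset.sum_congr rfl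
    intro x _
    rw [dif_pos (by omega : (x:ℕ)+1 < m+1+1), dif_pos (by omega : (x:ℕ)+1 < m+1), key]
  rw [hsum]
  rw [dif_neg (by omega : ¬ (m+1+1 < m+1+1))]
  rw [dif_neg (lt_irrefl (m+1))]
  rw [dif_pos (by omega : m+1 < m+1+1)]
  have h2 : (⟨m+1, by omega⟩ : Fin (m+2)) = Fin.last (m+1) := rfl
  rw [h2, Fin.snoc_last]
  omega

noncomputable def Gc (q : ℂ) {r : ℕ} (m : ℕ) (t : Fin r → ℕ) (j : Fin r) : ℂ :=
  ∑ x ∈ Finset.univ.filter (fun x : Fin (m+1) → Fin r =>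
      (∀ k, tau k x = t k) ∧ x (Fin.last m) = j), q ^ gam x

noncomputable def Pc (q : ℂ) {r : ℕ} (t : Fin r → ℕ) : ℂ := ∏ k : Fin r, qfactC q (t k)

lemma tau_last_pos {m r : ℕ} (x : Fin (m+1) → Fin r) (j : Fin r) (h : x (Fin.last m) = j) :
    1 ≤ tau j x := by
  rw [tau]
  apply Finset.card_pos.mpr
  exact ⟨Fin.last m, Finset.mem_filter.mpr ⟨Finset.mem_univ _, h⟩⟩

lemma Gc_zero (q : ℂ) {r : ℕ} (m : ℕ) (t : Fin r → ℕ) (j : Fin r) (htj : t j = 0) :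
    Gc q m t j = 0 := by
  apply Finset.sum_eq_zero
  intro x hx
  rw [Finset.mem_filter] at hx
  have := tau_last_pos x j hx.2.2
  rw [hx.2.1 j, htj] at this
  omega

lemma Gc_succ (q : ℂ) {r : ℕ} (m : ℕ) (t : Fin r → ℕ) (j : Fin r) (htj : 1 ≤ t j) :
    Gc q (m+1) t j = ∑ k : Fin r, q ^ ((m+1) * (if (j : ℕ) < (k : ℕ) then 1 else 0))
      * Gc q m (fun l => t l - (if l = j then 1 else 0)) k := by
  set s : Fin r → ℕ := fun l => t l - (if l = j then 1 else 0) with hs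
  have stepA : Gc q (m+1) t j = ∑ y ∈ Finset.univ.filter
      (fun y : Fin (m+1) → Fin r => (∀ k, tau k y = s k)),
      q ^ gam y * q ^ ((m+1) * (if (j : ℕ) < (y (Fin.last m) : ℕ) then 1 else 0)) := by
    rw [Gc]
    apply Finset.sum_nbij' (i := fun x => Fin.init x) (j := fun y => Fin.snoc y j)
    · intro x hx
      rw [Finset.mem_filter] at hx ⊢
      refine ⟨Finset.mem_univ _, fun k => ?_⟩
      have hx2 : x = Fin.snoc (Fin.init x) j := by
        rw [← hx.2.2]; exact (Fin.snoc_init_self x).symm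
      have := tau_snoc (Fin.init x) j k
      rw [← hx2, hx.2.1 k] at this
      simp only [hs]
      rcases eq_or_ne k j with h | h
      · subst h; rw [if_pos rfl] at this; rw [if_pos rfl]; omega
      · rw [if_neg (fun hh => h hh.symm)] at this; rw [if_neg h]; omega
    · intro y hy
      rw [Finset.mem_filter] at hy ⊢
      refine ⟨Finset.mem_univ _, fun k => ?_, by simp⟩
      rw [tau_snoc y j k, hy.2 k]
      simp only [hs]
      rcases eq_or_ne k j with h | h
      · subst h
        split <;> omega
      · rw [if_neg h, if_neg (fun hh => h hh.symm)]; omega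
    · intro x hx
      rw [Finset.mem_filter] at hx
      rw [← hx.2.2]
      exact Fin.snoc_init_self x
    · intro y _; simp
    · intro x hx
      rw [Finset.mem_filter] at hx
      conv_lhs => rw [← Fin.snoc_init_self x, hx.2.2]
      rw [gam_snoc, pow_add]
      have e : (if (j : ℕ) < ((Fin.init x) (Fin.last m) : ℕ) then m+1 else 0)
          = (m+1) * (if (j : ℕ) < ((Fin.init x) (Fin.last m) : ℕ) then 1 else 0) := by
        rcases lt_or_ge ((j : ℕ)) (((Fin.init x) (Fin.last m) : Fin r) : ℕ) with h | h
        · rw [if_pos h, if_pos h, Nat.mul_one]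
        · rw [if_neg (by omega), if_neg (by omega), Nat.mul_zero]
      rw [e]
  rw [stepA]
  rw [← Finset.sum_fiberwise (Finset.univ.filter (fun y : Fin (m+1) → Fin r =>
      (∀ k, tau k y = s k))) (fun y => y (Fin.last m))
      (fun y => q ^ gam y * q ^ ((m+1) * (if (j : ℕ) < (y (Fin.last m) : ℕ) then 1 else 0)))]
  apply Finset.sum_congr rfl
  intro k _
  rw [Gc, Finset.mul_sum, Finset.filter_filter]
  apply Finset.sum_congr
  · apply Finset.filter_congr
    intro y _
    constructor
    · rintro ⟨h1, h2⟩; exact ⟨h1, h2⟩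
    · rintro ⟨h1, h2⟩; exact ⟨h1, h2⟩
  · intro y hy
    rw [Finset.mem_filter] at hy
    rw [hy.2.2]
    ring

lemma qintC_zero (q : ℂ) : qintC q 0 = 0 := by simp [qintC]
lemma qintC_one (q : ℂ) : qintC q 1 = 1 := by simp [qintC]
lemma qfactC_zero (q : ℂ) : qfactC q 0 = 1 := by simp [qfactC]

lemma keyL (q : ℂ) {r : ℕ} : ∀ (m : ℕ) (t : Fin r → ℕ) (j : Fin r),
    (∑ k : Fin r, t k) = m + 1 →
    Gc q m t j * Pc q t = q ^ (∑ l ∈ Finset.Ioi j, t l) * qfactC q m * qintC q (t j) := by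
  intro m
  induction m with
  | zero =>
    intro t j hsum
    by_cases htj : t j = 0
    · rw [Gc_zero q 0 t j htj, htj, qintC_zero, zero_mul, mul_zero]
    · have h1 : t j = 1 := by
        have := Finset.single_le_sum (f := t) (fun k _ => Nat.zero_le _) (Finset.mem_univ j)
        omega
      have h0 : ∀ k, k ≠ j → t k = 0 := by
        intro k hk
        have e1 : ∑ k ∈ Finset.univ.erase j, t k = 0 := by
          have := Finset.add_sum_erase Finset.univ t (Finset.mem_univ j)
          omega
        have := Finset.sum_eq_zero_iff.mp e1 k (Finset.mem_erase.mpr ⟨hk, Finset.mem_univ k⟩)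
        exact this
      have hfil : Finset.univ.filter (fun x : Fin 1 → Fin r =>
          (∀ k, tau k x = t k) ∧ x (Fin.last 0) = j) = {fun _ => j} := by
        ext x
        simp only [Finset.mem_filter, Finset.mem_univ, true_and, Finset.mem_singleton]
        constructor
        · rintro ⟨_, h2⟩
          funext i
          rw [Subsingleton.elim i (Fin.last 0), h2]
        · rintro rfl
          refine ⟨fun k => ?_, rfl⟩
          rcases eq_or_ne k j with h | h
          · subst h
            rw [h1, tau]
            simp
          · rw [h0 k h, tau]
            rw [Finset.card_eq_zero, Finset.filter_eq_empty_iff]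
            intro i _
            exact fun hh => h hh.symm
      have hgam : gam (fun _ : Fin 1 => j) = 0 := by
        rw [gam]
        apply Finset.sum_eq_zero
        intro i _
        rw [dif_neg (by omega)]
      have hPc : Pc q t = 1 := by
        rw [Pc]
        apply Finset.prod_eq_one
        intro k _
        rcases eq_or_ne k j with h | h
        · subst h; rw [h1, qfactC]; simp [qintC_one]
        · rw [h0 k h, qfactC_zero]
      have hIoi : ∑ l ∈ Finset.Ioi j, t l = 0 := by
        apply Finset.sum_eq_zero
        intro l hl
        exact h0 l (ne_of_gt (Finset.mem_Ioi.mp hl))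
      rw [Gc, hfil, Finset.sum_singleton, hgam, hIoi, hPc, h1, qintC_one, qfactC_zero]
      simp
  | succ m ih =>
    intro t j hsum
    by_cases htj : t j = 0
    · rw [Gc_zero q (m+1) t j htj, htj, qintC_zero, zero_mul, mul_zero]
    · have htj1 : 1 ≤ t j := Nat.one_le_iff_ne_zero.mpr htj
      set s : Fin r → ℕ := fun l => t l - (if l = j then 1 else 0) with hs
      have hsk : ∀ k, s k + (if k = j then 1 else 0) = t k := by
        intro k
        simp only [hs]
        rcases eq_or_ne k j with h | h
        · subst h; split <;> omega
        · rw [if_neg h]; omega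
      have hssum : (∑ k : Fin r, s k) = m + 1 := by
        have e1 : ∑ k : Fin r, (s k + (if k = j then 1 else 0)) = m + 2 := by
          rw [Finset.sum_congr rfl (fun k _ => hsk k)]; exact hsum
        rw [Finset.sum_add_distrib, Finset.sum_ite_eq' Finset.univ j (fun _ => 1)] at e1
        simp at e1
        omega
      have hP : Pc q t = Pc q s * qintC q (t j) := by
        rw [Pc, Pc, ← Finset.mul_prod_erase Finset.univ _ (Finset.mem_univ j),
          ← Finset.mul_prod_erase Finset.univ (fun k => qfactC q (s k)) (Finset.mem_univ j)]
        have e2 : qfactC q (t j) = qfactC q (s j) * qintC q (t j) := by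
          have : s j + 1 = t j := by rw [← hsk j, if_pos rfl]
          rw [← this, qfactC_succ]
        rw [e2]
        have e3 : ∏ k ∈ Finset.univ.erase j, qfactC q (t k)
            = ∏ k ∈ Finset.univ.erase j, qfactC q (s k) := by
          apply Finset.prod_congr rfl
          intro k hk
          rw [← hsk k, if_neg (Finset.mem_erase.mp hk).1, Nat.add_zero]
        rw [e3]
        ring
      have hE : ∑ l ∈ Finset.Ioi j, s l = ∑ l ∈ Finset.Ioi j, t l := by
        apply Finset.sum_congr rfl
        intro l hl
        rw [← hsk l, if_neg (ne_of_gt (Finset.mem_Ioi.mp hl)), Nat.add_zero]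
      rw [Gc_succ q m t j htj1, Finset.sum_mul, hP]
      have e4 : ∀ k : Fin r, q ^ ((m+1) * (if (j : ℕ) < (k : ℕ) then 1 else 0)) * Gc q m s k
          * (Pc q s * qintC q (t j))
          = qintC q (t j) * (qfactC q m *
            (q ^ ((∑ l : Fin r, s l) * (if j < k then 1 else 0) + ∑ l ∈ Finset.Ioi k, s l)
              * qintC q (s k))) := by
        intro k
        have := ih s k hssum
        rw [pow_add]
        have hlt : (if j < k then 1 else 0) = (if (j : ℕ) < (k : ℕ) then 1 else 0) := by
          by_cases hc : j < k
          · rw [if_pos hc, if_pos (Fin.lt_def.mp hc)]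
          · rw [if_neg hc, if_neg (fun hh => hc (Fin.lt_def.mpr hh))]
        rw [hlt, hssum]
        calc q ^ ((m+1) * (if (j : ℕ) < (k : ℕ) then 1 else 0)) * Gc q m s k
              * (Pc q s * qintC q (t j))
            = q ^ ((m+1) * (if (j : ℕ) < (k : ℕ) then 1 else 0)) * qintC q (t j)
              * (Gc q m s k * Pc q s) := by ring
          _ = q ^ ((m+1) * (if (j : ℕ) < (k : ℕ) then 1 else 0)) * qintC q (t j)
              * (q ^ (∑ l ∈ Finset.Ioi k, s l) * qfactC q m * qintC q (s k)) := by rw [this]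
          _ = _ := by ring
      rw [Finset.sum_congr rfl (fun k _ => e4 k), ← Finset.mul_sum, ← Finset.mul_sum,
        star q r s j, hssum, hE, qfactC_succ]
      ring

lemma contentL (q : ℂ) {r : ℕ} (m : ℕ) (t : Fin r → ℕ) (h : (∑ k : Fin r, t k) = m + 1) :
    (∑ x ∈ Finset.univ.filter (fun x : Fin (m+1) → Fin r => ∀ k, tau k x = t k),
      q ^ gam x) * Pc q t = qfactC q (m+1) := by
  rw [← Finset.sum_fiberwise (Finset.univ.filter (fun x : Fin (m+1) → Fin r =>
      ∀ k, tau k x = t k)) (fun x => x (Fin.last m)) (fun x => q ^ gam x)]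
  have e1 : ∀ j : Fin r, ∑ x ∈ (Finset.univ.filter (fun x : Fin (m+1) → Fin r =>
      ∀ k, tau k x = t k)).filter (fun x => x (Fin.last m) = j), q ^ gam x = Gc q m t j := by
    intro j
    rw [Gc, Finset.filter_filter]
  rw [Finset.sum_congr rfl (fun j _ => e1 j), Finset.sum_mul,
    Finset.sum_congr rfl (fun j _ => keyL q m t j h)]
  have e2 : ∀ j : Fin r, q ^ (∑ l ∈ Finset.Ioi j, t l) * qfactC q m * qintC q (t j)
      = qfactC q m * (q ^ (∑ l ∈ Finset.Ioi j, t l) * qintC q (t j)) := fun j => by ring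
  rw [Finset.sum_congr rfl (fun j _ => e2 j), ← Finset.mul_sum, fullsum, h, qfactC_succ]

lemma tau_sum {n r : ℕ} (x : Fin n → Fin r) : ∑ k : Fin r, tau k x = n := by
  simp only [tau, Finset.card_filter]
  rw [Finset.sum_comm]
  have : ∀ i : Fin n, (∑ k : Fin r, if x i = k then 1 else 0) = 1 := by
    intro i
    rw [Finset.sum_ite_eq Finset.univ (x i) (fun _ => 1)]
    simp
  rw [Finset.sum_congr rfl (fun i _ => this i)]
  simp

lemma sig_eq {n r : ℕ} (x : Fin n → Fin r) : sig x = ∑ j : Fin r, (j : ℕ) * tau j x := by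
  rw [sig, ← Finset.sum_fiberwise Finset.univ (fun i => x i) (fun i => ((x i : ℕ)))]
  apply Finset.sum_congr rfl
  intro j _
  have : ∀ i ∈ Finset.univ.filter (fun i => x i = j), ((x i : ℕ)) = (j : ℕ) := by
    intro i hi
    rw [(Finset.mem_filter.mp hi).2]
  rw [Finset.sum_congr rfl this, Finset.sum_const, tau, smul_eq_mul, Nat.mul_comm]

theorem stmt_10 (n r : ℕ) (hn : 0 < n) (hr : 0 < r)
    (q z : ℂ) (w : Fin r → ℂ) (hq : ∀ i ∈ Finset.Icc 1 n, qintC q i ≠ 0) :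
    ∑ x : Fin n → Fin r, q ^ gam x * z ^ sig x * ∏ j : Fin r, w j ^ tau j x
      = ∑ t ∈ Finset.univ.filter (fun t : Fin r → Fin (n + 1) => ∑ i : Fin r, (t i : ℕ) = n),
          (qfactC q n / ∏ j : Fin r, qfactC q (t j : ℕ)) *
            ∏ j : Fin r, (w j ^ (t j : ℕ) * z ^ ((j : ℕ) * (t j : ℕ))) := by
  obtain ⟨m, rfl⟩ : ∃ m, n = m + 1 := ⟨n - 1, by omega⟩
  have htanle : ∀ (x : Fin (m+1) → Fin r) (k : Fin r), tau k x < m + 2 := by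
    intro x k
    have := Finset.card_filter_le (Finset.univ : Finset (Fin (m+1))) (fun i => x i = k)
    rw [tau]
    simp only [Finset.card_univ, Fintype.card_fin] at this
    omega
  set c : (Fin (m+1) → Fin r) → (Fin r → Fin (m+2)) :=
    fun x k => ⟨tau k x, htanle x k⟩ with hc
  set f : (Fin (m+1) → Fin r) → ℂ :=
    fun x => q ^ gam x * z ^ sig x * ∏ j : Fin r, w j ^ tau j x with hf
  have step1 : ∑ x : Fin (m+1) → Fin r, f x
      = ∑ t : Fin r → Fin (m+2), ∑ x ∈ Finset.univ.filter (fun x => c x = t), f x :=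
    (Finset.sum_fiberwise Finset.univ c f).symm
  have hPne : ∀ t : Fin r → Fin (m+2), Pc q (fun k => (t k : ℕ)) ≠ 0 := by
    intro t
    rw [Pc]
    apply Finset.prod_ne_zero_iff.mpr
    intro k _
    rw [qfactC]
    apply Finset.prod_ne_zero_iff.mpr
    intro i hi
    apply hq
    rw [Finset.mem_Icc] at hi ⊢
    have := (t k).isLt
    omega
  have step2 : ∀ t : Fin r → Fin (m+2), (∑ i : Fin r, (t i : ℕ)) = m + 1 →
      ∑ x ∈ Finset.univ.filter (fun x => c x = t), f x
        = (qfactC q (m+1) / ∏ j : Fin r, qfactC q (t j : ℕ)) *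
            ∏ j : Fin r, (w j ^ (t j : ℕ) * z ^ ((j : ℕ) * (t j : ℕ))) := by
    intro t ht
    have hfil : Finset.univ.filter (fun x : Fin (m+1) → Fin r => c x = t)
        = Finset.univ.filter (fun x => ∀ k, tau k x = (t k : ℕ)) := by
      apply Finset.filter_congr
      intro x _
      simp only [hc, funext_iff, Fin.ext_iff]
    have hval : ∀ x ∈ Finset.univ.filter
        (fun x : Fin (m+1) → Fin r => ∀ k, tau k x = (t k : ℕ)), f x
          = q ^ gam x * ∏ j : Fin r, (w j ^ (t j : ℕ) * z ^ ((j : ℕ) * (t j : ℕ))) := by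
      intro x hx
      have hx2 := (Finset.mem_filter.mp hx).2
      rw [hf]
      simp only
      rw [sig_eq, Finset.prod_mul_distrib, ← Finset.prod_pow_eq_pow_sum]
      have e1 : ∀ j : Fin r, w j ^ tau j x = w j ^ ((t j : ℕ)) := fun j => by rw [hx2 j]
      have e2 : ∀ j : Fin r, z ^ ((j : ℕ) * tau j x) = z ^ ((j : ℕ) * (t j : ℕ)) :=
        fun j => by rw [hx2 j]
      rw [Finset.prod_congr rfl (fun j _ => e1 j), Finset.prod_congr rfl (fun j _ => e2 j)]
      ring
    rw [hfil, Finset.sum_congr rfl hval, ← Finset.sum_mul]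
    have hcl := contentL q m (fun k => (t k : ℕ)) ht
    have : (∑ x ∈ Finset.univ.filter
        (fun x : Fin (m+1) → Fin r => ∀ k, tau k x = (t k : ℕ)), q ^ gam x)
        = qfactC q (m+1) / ∏ j : Fin r, qfactC q (t j : ℕ) := by
      rw [eq_div_iff (show (∏ j : Fin r, qfactC q (t j : ℕ)) ≠ 0 from hPne t)]
      exact hcl
    rw [this]
  rw [step1, ← Finset.sum_filter_add_sum_filter_not Finset.univ
      (fun t : Fin r → Fin (m+2) => ∑ i : Fin r, (t i : ℕ) = m + 1)]
  have step3 : ∑ t ∈ Finset.univ.filter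
      (fun t : Fin r → Fin (m+2) => ¬ (∑ i : Fin r, (t i : ℕ) = m + 1)),
      ∑ x ∈ Finset.univ.filter (fun x => c x = t), f x = 0 := by
    apply Finset.sum_eq_zero
    intro t ht
    apply Finset.sum_eq_zero
    intro x hx
    exfalso
    have hx2 := (Finset.mem_filter.mp hx).2
    have ht2 := (Finset.mem_filter.mp ht).2
    apply ht2
    rw [← hx2]
    simp only [hc]
    exact tau_sum x
  rw [step3, add_zero]
  exact Finset.sum_congr rfl (fun t ht => step2 t (Finset.mem_filter.mp ht).2)
end
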